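/- arXiv:2203.04562 — 2 statements merged into one kernel-verified Lean document; each statement's English description precedes it below -/
import Mathlib

section
/- For the transport recursion of Seeley–DeWitt coefficients with a_1(x,y) = ∫₀¹ v(y+t(x-y)) dt, the second coefficient satisfies on the diagonal a_2(y,y) = (1/6)Δv(y) + ½v(y)². -/
open intervalIntegral Metric Set

variable {n : ℕ}

local notation "E" => EuclideanSpace ℝ (Fin n)

lemma key {n : ℕ} (g : EuclideanSpace ℝ (Fin n) → ℝ) (hg : ContDiff ℝ 1 g)
    (c : ℝ → ℝ) (hc : Continuous c) (y x₀ : EuclideanSpace ℝ (Fin n)) :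
    HasFDerivAt (fun x => ∫ t in (0:ℝ)..1, c t * g (y + t • (x - y)))
      (∫ t in (0:ℝ)..1, (c t * t) • fderiv ℝ g (y + t • (x₀ - y))) x₀ := by
  have hgc : Continuous g := hg.continuous
  have hg' : Continuous (fderiv ℝ g) := hg.continuous_fderiv one_ne_zero
  -- bound on fderiv g on a big ball
  obtain ⟨M, hM⟩ := (isCompact_closedBall y (‖x₀ - y‖ + 1)).exists_bound_of_continuousOn
    hg'.continuousOn
  obtain ⟨Mc, hMc⟩ := (isCompact_Icc (a := (0:ℝ)) (b := 1)).exists_bound_of_continuousOn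
    hc.continuousOn
  have hMc0 : 0 ≤ Mc := le_trans (norm_nonneg _) (hMc 0 (by norm_num))
  have hM0 : 0 ≤ M := le_trans (norm_nonneg _) (hM y (by simp [Metric.mem_closedBall]; positivity))
  have harg : ∀ (t : ℝ), t ∈ Set.uIoc (0:ℝ) 1 → ∀ x ∈ ball x₀ 1,
      y + t • (x - y) ∈ closedBall y (‖x₀ - y‖ + 1) := by
    intro t ht x hx
    rw [Set.uIoc_of_le (by norm_num : (0:ℝ) ≤ 1)] at ht
    simp only [Metric.mem_closedBall, dist_eq_norm, add_sub_cancel_left]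
    calc ‖t • (x - y)‖ = |t| * ‖x - y‖ := by rw [norm_smul, Real.norm_eq_abs]
      _ ≤ 1 * ‖x - y‖ := by
          apply mul_le_mul_of_nonneg_right _ (norm_nonneg _)
          rw [abs_of_pos ht.1]; exact ht.2
      _ ≤ ‖x - x₀‖ + ‖x₀ - y‖ := by
          rw [one_mul]
          calc ‖x - y‖ = ‖(x - x₀) + (x₀ - y)‖ := by abel_nf
            _ ≤ ‖x - x₀‖ + ‖x₀ - y‖ := norm_add_le _ _
      _ ≤ ‖x₀ - y‖ + 1 := by
          rw [mem_ball, dist_eq_norm] at hx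
          linarith [hx.le]
  have hdiff : ∀ (t : ℝ) (x : EuclideanSpace ℝ (Fin n)),
      HasFDerivAt (fun x => c t * g (y + t • (x - y)))
        ((c t * t) • fderiv ℝ g (y + t • (x - y))) x := by
    intro t x
    have hinner : HasFDerivAt (fun x : EuclideanSpace ℝ (Fin n) => y + t • (x - y))
        (t • ContinuousLinearMap.id ℝ (EuclideanSpace ℝ (Fin n))) x :=
      (((hasFDerivAt_id x).sub_const y).const_smul t).const_add y
    have hgp : HasFDerivAt g (fderiv ℝ g (y + t • (x - y))) (y + t • (x - y)) :=
      (hg.differentiable one_ne_zero _).hasFDerivAt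
    have := (hgp.comp x hinner).const_mul (c t)
    refine this.congr_fderiv ?_
    ext z
    simp [mul_comm, mul_assoc, mul_left_comm]
  apply intervalIntegral.hasFDerivAt_integral_of_dominated_of_fderiv_le (s := ball x₀ 1)
    (bound := fun _ => Mc * M) (F' := fun x t => (c t * t) • fderiv ℝ g (y + t • (x - y)))
    (ball_mem_nhds x₀ one_pos)
  · filter_upwards with x
    exact (Continuous.aestronglyMeasurable (by fun_prop)).restrict
  · exact (Continuous.intervalIntegrable (by fun_prop) _ _)
  · exact (Continuous.aestronglyMeasurable (by fun_prop)).restrict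
  · filter_upwards with t
    intro ht x hx
    have h1 : ‖c t‖ ≤ Mc := hMc t (by
      rw [Set.uIoc_of_le (by norm_num : (0:ℝ) ≤ 1)] at ht
      exact ⟨ht.1.le, ht.2⟩)
    have h2 : ‖fderiv ℝ g (y + t • (x - y))‖ ≤ M := hM _ (harg t ht x hx)
    have h3 : |t| ≤ 1 := by
      rw [Set.uIoc_of_le (by norm_num : (0:ℝ) ≤ 1)] at ht
      rw [abs_of_pos ht.1]; exact ht.2
    calc ‖(c t * t) • fderiv ℝ g (y + t • (x - y))‖
        = |c t| * |t| * ‖fderiv ℝ g (y + t • (x - y))‖ := by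
          rw [norm_smul, Real.norm_eq_abs, abs_mul]
      _ ≤ Mc * 1 * M := by
          apply mul_le_mul _ h2 (norm_nonneg _) (by positivity)
          exact mul_le_mul h1 h3 (abs_nonneg _) hMc0
      _ = Mc * M := by ring
  · exact intervalIntegrable_const
  · filter_upwards with t _ x _
    exact hdiff t x


/-- The Laplacian of `f : ℝⁿ → ℝ`. -/
noncomputable def laplacian {n : ℕ} (f : EuclideanSpace ℝ (Fin n) → ℝ)
    (x : EuclideanSpace ℝ (Fin n)) : ℝ :=
  ∑ i, fderiv ℝ (fun y => fderiv ℝ f y (EuclideanSpace.single i 1)) x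
    (EuclideanSpace.single i 1)

/-- With `a₁(x,y) = ∫₀¹ v(y+t(x-y)) dt` and `a₂` defined by the transport
recursion `(2 + (x-y)^μ∂_μ^{(x)}) a₂(x,y) = (Δ_x + v(x)) a₁(x,y)`, the diagonal
value of the second Seeley–DeWitt coefficient is
`a₂(y,y) = (1/6)Δv(y) + ½v(y)²`. -/
theorem seeley_dewitt_a2_diag {n : ℕ} (v : EuclideanSpace ℝ (Fin n) → ℝ)
    (hv : ContDiff ℝ (⊤ : ℕ∞) v)
    (a1 a2 : EuclideanSpace ℝ (Fin n) → EuclideanSpace ℝ (Fin n) → ℝ)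
    (ha1 : ∀ x y, a1 x y = ∫ t in (0:ℝ)..1, v (y + t • (x - y)))
    (hrec : ∀ x y : EuclideanSpace ℝ (Fin n),
      2 * a2 x y
        + ∑ μ, (x μ - y μ) * fderiv ℝ (fun x' => a2 x' y) x (EuclideanSpace.single μ 1)
      = laplacian (fun x' => a1 x' y) x + v x * a1 x y)
    (y : EuclideanSpace ℝ (Fin n)) :
    a2 y y = (1/6) * laplacian v y + (1/2) * (v y) ^ 2 := by
  have hv1 : ContDiff ℝ 1 v := hv.of_le (by simp)
  have hv' : Continuous (fderiv ℝ v) := hv1.continuous_fderiv one_ne_zero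
  -- a1 on the diagonal
  have ha1y : a1 y y = v y := by
    rw [ha1]; simp
  -- first derivative of a1 in x
  have hF : (fun x' => a1 x' y) = fun x => ∫ t in (0:ℝ)..1, (1:ℝ) * v (y + t • (x - y)) := by
    funext x; rw [ha1]; simp
  have hD1 : ∀ (x : EuclideanSpace ℝ (Fin n)) (i : Fin n),
      fderiv ℝ (fun x' => a1 x' y) x (EuclideanSpace.single i 1)
        = ∫ t in (0:ℝ)..1, t * fderiv ℝ v (y + t • (x - y)) (EuclideanSpace.single i 1) := by
    intro x i
    have h := key v hv1 (fun _ => 1) continuous_const y x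
    rw [hF, h.fderiv]
    have hint : IntervalIntegrable
        (fun t : ℝ => ((1 : ℝ) * t) • fderiv ℝ v (y + t • (x - y)))
        MeasureTheory.volume 0 1 :=
      (Continuous.intervalIntegrable (by fun_prop) _ _)
    rw [ContinuousLinearMap.intervalIntegral_apply hint]
    simp
  -- set up directional derivative functions
  have hlap : laplacian (fun x' => a1 x' y) y = (1/3) * laplacian v y := by
    unfold laplacian
    rw [Finset.mul_sum]
    apply Finset.sum_congr rfl
    intro i _
    set e := EuclideanSpace.single i (1:ℝ) with he
    have hw : ContDiff ℝ 1 (fun z => fderiv ℝ v z e) :=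
      ((hv.fderiv_right (m := 1) (WithTop.coe_le_coe.mpr le_top)).clm_apply contDiff_const).of_le le_rfl
    have hG : (fun x => fderiv ℝ (fun x' => a1 x' y) x e)
        = fun x => ∫ t in (0:ℝ)..1, t * (fun z => fderiv ℝ v z e) (y + t • (x - y)) := by
      funext x; exact hD1 x i
    have h2 := key (fun z => fderiv ℝ v z e) hw (fun t => t) continuous_id y y
    rw [hG, h2.fderiv]
    have hsimp : ∀ t : ℝ, y + t • (y - y) = y := by intro t; simp
    have : (∫ t in (0:ℝ)..1, (t * t) • fderiv ℝ (fun z => fderiv ℝ v z e) (y + t • (y - y)))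
        = (∫ t in (0:ℝ)..1, t * t) • fderiv ℝ (fun z => fderiv ℝ v z e) y := by
      simp_rw [hsimp]
      exact intervalIntegral.integral_smul_const _ _
    rw [this]
    have hint2 : (∫ t in (0:ℝ)..1, t * t) = 1/3 := by
      simp_rw [← sq]
      rw [integral_pow]
      norm_num
    rw [hint2]
    simp
  -- conclude from the recursion at x = y
  have h := hrec y y
  simp only [sub_self, zero_mul, Finset.sum_const_zero, add_zero] at h
  rw [hlap, ha1y] at h
  nlinarith [h]
end

section
/- For the transport recursion of Seeley–DeWitt coefficients, the third coefficient on the diagonal equals a_3(y,y) = (1/60)Δ²v(y) + (1/6)v(y)³ + (1/12)|∇v(y)|² + (1/6)v(y)Δv(y). -/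
/-- Partial derivative of `f : ℝⁿ → ℝ` in the `μ`-th coordinate direction. -/
noncomputable def pd {n : ℕ} (f : EuclideanSpace ℝ (Fin n) → ℝ) (μ : Fin n) :
    EuclideanSpace ℝ (Fin n) → ℝ :=
  fun x => fderiv ℝ f x (EuclideanSpace.single μ 1)

namespace SDW
variable {n : ℕ}

noncomputable def eul (y : EuclideanSpace ℝ (Fin n)) (f : EuclideanSpace ℝ (Fin n) → ℝ) :
    EuclideanSpace ℝ (Fin n) → ℝ :=
  fun x => ∑ ν, (x ν - y ν) * pd f ν x

lemma contDiff_pd {f : EuclideanSpace ℝ (Fin n) → ℝ} (hf : ContDiff ℝ (⊤ : ℕ∞) f) (μ : Fin n) :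
    ContDiff ℝ (⊤ : ℕ∞) (pd f μ) :=
  (hf.fderiv_right (m := (⊤ : ℕ∞)) le_rfl).clm_apply contDiff_const

lemma lap_eq (f : EuclideanSpace ℝ (Fin n) → ℝ) (x : EuclideanSpace ℝ (Fin n)) :
    laplacian f x = ∑ μ, pd (pd f μ) μ x := rfl

lemma contDiff_lap {f : EuclideanSpace ℝ (Fin n) → ℝ} (hf : ContDiff ℝ (⊤ : ℕ∞) f) :
    ContDiff ℝ (⊤ : ℕ∞) (laplacian f) := by
  have : laplacian f = fun x => ∑ μ, pd (pd f μ) μ x := rfl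
  rw [this]
  exact ContDiff.sum fun μ _ => contDiff_pd (contDiff_pd hf μ) μ

lemma dAt {f : EuclideanSpace ℝ (Fin n) → ℝ} (hf : ContDiff ℝ (⊤ : ℕ∞) f)
    (x : EuclideanSpace ℝ (Fin n)) : DifferentiableAt ℝ f x :=
  (hf.differentiable (by simp)) x

lemma pd_add {f g : EuclideanSpace ℝ (Fin n) → ℝ} (hf : ContDiff ℝ (⊤ : ℕ∞) f) (hg : ContDiff ℝ (⊤ : ℕ∞) g)
    (μ : Fin n) (x : EuclideanSpace ℝ (Fin n)) :
    pd (fun z => f z + g z) μ x = pd f μ x + pd g μ x := by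
  simp [pd, fderiv_fun_add (dAt hf x) (dAt hg x)]

lemma pd_const_mul {f : EuclideanSpace ℝ (Fin n) → ℝ} (hf : ContDiff ℝ (⊤ : ℕ∞) f) (c : ℝ)
    (μ : Fin n) (x : EuclideanSpace ℝ (Fin n)) :
    pd (fun z => c * f z) μ x = c * pd f μ x := by
  simp [pd, fderiv_const_mul (dAt hf x) c]

lemma pd_mul {f g : EuclideanSpace ℝ (Fin n) → ℝ} (hf : ContDiff ℝ (⊤ : ℕ∞) f) (hg : ContDiff ℝ (⊤ : ℕ∞) g)
    (μ : Fin n) (x : EuclideanSpace ℝ (Fin n)) :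
    pd (fun z => f z * g z) μ x = pd f μ x * g x + f x * pd g μ x := by
  simp [pd, fderiv_fun_mul (dAt hf x) (dAt hg x)]
  ring

lemma pd_sum {ι : Type*} (s : Finset ι) {f : ι → EuclideanSpace ℝ (Fin n) → ℝ}
    (hf : ∀ i, ContDiff ℝ (⊤ : ℕ∞) (f i)) (μ : Fin n) (x : EuclideanSpace ℝ (Fin n)) :
    pd (fun z => ∑ i ∈ s, f i z) μ x = ∑ i ∈ s, pd (f i) μ x := by
  simp [pd, fderiv_fun_sum (fun i _ => dAt (hf i) x)]

lemma pd_coord (y : EuclideanSpace ℝ (Fin n)) (ν μ : Fin n) (x : EuclideanSpace ℝ (Fin n)) :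
    pd (fun z => z ν - y ν) μ x = if μ = ν then 1 else 0 := by
  have h : (fun z : EuclideanSpace ℝ (Fin n) => z ν - y ν)
      = fun z => EuclideanSpace.proj (𝕜 := ℝ) ν z - y ν := rfl
  rw [pd, h, fderiv_sub_const, ContinuousLinearMap.fderiv]
  simp [EuclideanSpace.single_apply, eq_comm]

lemma contDiff_coord (y : EuclideanSpace ℝ (Fin n)) (ν : Fin n) :
    ContDiff ℝ (⊤ : ℕ∞) (fun z : EuclideanSpace ℝ (Fin n) => z ν - y ν) :=
  ((EuclideanSpace.proj (𝕜 := ℝ) ν).contDiff).sub contDiff_const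

lemma contDiff_eul (y : EuclideanSpace ℝ (Fin n)) {f : EuclideanSpace ℝ (Fin n) → ℝ}
    (hf : ContDiff ℝ (⊤ : ℕ∞) f) : ContDiff ℝ (⊤ : ℕ∞) (eul y f) :=
  ContDiff.sum fun ν _ => (contDiff_coord y ν).mul (contDiff_pd hf ν)

lemma eul_self (y : EuclideanSpace ℝ (Fin n)) (f : EuclideanSpace ℝ (Fin n) → ℝ) :
    eul y f y = 0 := by
  simp [eul]

lemma pd_swap {f : EuclideanSpace ℝ (Fin n) → ℝ} (hf : ContDiff ℝ (⊤ : ℕ∞) f)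
    (μ ν : Fin n) (x : EuclideanSpace ℝ (Fin n)) :
    pd (pd f ν) μ x = pd (pd f μ) ν x := by
  have hd : ContDiff ℝ (⊤ : ℕ∞) (fderiv ℝ f) := hf.fderiv_right (m := (⊤ : ℕ∞)) le_rfl
  have h1 : ∀ (w u : EuclideanSpace ℝ (Fin n)),
      fderiv ℝ (fun z => fderiv ℝ f z w) x u = fderiv ℝ (fderiv ℝ f) x u w := by
    intro w u
    have : fderiv ℝ (fun z => (fderiv ℝ f z) w) x
        = (fderiv ℝ (fderiv ℝ f) x).flip w := by
      rw [fderiv_clm_apply (hd.differentiable (by simp) x) (differentiableAt_const w)]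
      ext u'
      simp
    rw [this]; rfl
  have hsym : IsSymmSndFDerivAt ℝ f x :=
    hf.contDiffAt.isSymmSndFDerivAt (by rw [minSmoothness_of_isRCLikeNormedField]; exact WithTop.coe_le_coe.mpr le_top)
  have e1 : pd (pd f ν) μ x
      = fderiv ℝ (fderiv ℝ f) x (EuclideanSpace.single μ 1) (EuclideanSpace.single ν 1) :=
    h1 _ _
  have e2 : pd (pd f μ) ν x
      = fderiv ℝ (fderiv ℝ f) x (EuclideanSpace.single ν 1) (EuclideanSpace.single μ 1) :=
    h1 _ _
  rw [e1, e2]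
  exact hsym _ _

lemma pd_const (c : ℝ) (μ : Fin n) (x : EuclideanSpace ℝ (Fin n)) :
    pd (fun _ : EuclideanSpace ℝ (Fin n) => c) μ x = 0 := by
  simp [pd]

lemma lap_const (c : ℝ) (x : EuclideanSpace ℝ (Fin n)) :
    laplacian (fun _ : EuclideanSpace ℝ (Fin n) => c) x = 0 := by
  rw [lap_eq]
  have : pd (fun _ : EuclideanSpace ℝ (Fin n) => c) = fun _ _ => 0 :=
    funext fun μ => funext fun z => pd_const c μ z
  simp [this, pd]

lemma pd_eul (y : EuclideanSpace ℝ (Fin n)) {f : EuclideanSpace ℝ (Fin n) → ℝ}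
    (hf : ContDiff ℝ (⊤ : ℕ∞) f) (μ : Fin n) (x : EuclideanSpace ℝ (Fin n)) :
    pd (eul y f) μ x = pd f μ x + eul y (pd f μ) x := by
  have h0 : eul y f = fun z => ∑ ν, (z ν - y ν) * pd f ν z := rfl
  rw [h0, pd_sum _ (fun ν => (contDiff_coord y ν).mul (contDiff_pd hf ν)) μ x]
  have h1 : ∀ ν, pd (fun z => (z ν - y ν) * pd f ν z) μ x
      = (if μ = ν then 1 else 0) * pd f ν x + (x ν - y ν) * pd (pd f μ) ν x := by
    intro ν
    rw [pd_mul (contDiff_coord y ν) (contDiff_pd hf ν), pd_coord, pd_swap hf μ ν]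
  rw [Finset.sum_congr rfl fun ν _ => h1 ν, Finset.sum_add_distrib]
  congr 1
  simp [ite_mul]

lemma lap_eul (y : EuclideanSpace ℝ (Fin n)) {f : EuclideanSpace ℝ (Fin n) → ℝ}
    (hf : ContDiff ℝ (⊤ : ℕ∞) f) (x : EuclideanSpace ℝ (Fin n)) :
    laplacian (eul y f) x = 2 * laplacian f x + eul y (laplacian f) x := by
  rw [lap_eq]
  have h1 : ∀ μ, pd (eul y f) μ = fun z => pd f μ z + eul y (pd f μ) z :=
    fun μ => funext fun z => pd_eul y hf μ z
  have h2 : ∀ μ, pd (pd (eul y f) μ) μ x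
      = 2 * pd (pd f μ) μ x + eul y (pd (pd f μ) μ) x := by
    intro μ
    rw [h1 μ, pd_add (contDiff_pd hf μ) (contDiff_eul y (contDiff_pd hf μ)),
      pd_eul y (contDiff_pd hf μ) μ x]
    ring
  rw [Finset.sum_congr rfl fun μ _ => h2 μ, Finset.sum_add_distrib, ← Finset.mul_sum,
    ← lap_eq]
  congr 1
  rw [eul]
  have h3 : ∀ ν, pd (laplacian f) ν x = ∑ μ, pd (pd (pd f μ) μ) ν x := by
    intro ν
    have : laplacian f = fun z => ∑ μ, pd (pd f μ) μ z := rfl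
    rw [this, pd_sum _ (fun μ => contDiff_pd (contDiff_pd hf μ) μ) ν x]
  simp only [eul, h3, Finset.mul_sum]
  rw [Finset.sum_comm]

lemma lap_add {f g : EuclideanSpace ℝ (Fin n) → ℝ} (hf : ContDiff ℝ (⊤ : ℕ∞) f)
    (hg : ContDiff ℝ (⊤ : ℕ∞) g) (x : EuclideanSpace ℝ (Fin n)) :
    laplacian (fun z => f z + g z) x = laplacian f x + laplacian g x := by
  rw [lap_eq, lap_eq, lap_eq, ← Finset.sum_add_distrib]
  refine Finset.sum_congr rfl fun μ _ => ?_
  have h1 : pd (fun z => f z + g z) μ = fun z => pd f μ z + pd g μ z :=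
    funext fun z => pd_add hf hg μ z
  rw [h1, pd_add (contDiff_pd hf μ) (contDiff_pd hg μ)]

lemma lap_const_mul {f : EuclideanSpace ℝ (Fin n) → ℝ} (hf : ContDiff ℝ (⊤ : ℕ∞) f) (c : ℝ)
    (x : EuclideanSpace ℝ (Fin n)) :
    laplacian (fun z => c * f z) x = c * laplacian f x := by
  rw [lap_eq, lap_eq, Finset.mul_sum]
  refine Finset.sum_congr rfl fun μ _ => ?_
  have h1 : pd (fun z => c * f z) μ = fun z => c * pd f μ z :=
    funext fun z => pd_const_mul hf c μ z
  rw [h1, pd_const_mul (contDiff_pd hf μ)]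

lemma lap_mul {f g : EuclideanSpace ℝ (Fin n) → ℝ} (hf : ContDiff ℝ (⊤ : ℕ∞) f)
    (hg : ContDiff ℝ (⊤ : ℕ∞) g) (x : EuclideanSpace ℝ (Fin n)) :
    laplacian (fun z => f z * g z) x
      = laplacian f x * g x + 2 * ∑ μ, pd f μ x * pd g μ x + f x * laplacian g x := by
  rw [lap_eq]
  have h2 : ∀ μ, pd (pd (fun z => f z * g z) μ) μ x
      = pd (pd f μ) μ x * g x + 2 * (pd f μ x * pd g μ x) + f x * pd (pd g μ) μ x := by
    intro μ
    have h1 : pd (fun z => f z * g z) μ = fun z => pd f μ z * g z + f z * pd g μ z :=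
      funext fun z => pd_mul hf hg μ z
    rw [h1, pd_add ((contDiff_pd hf μ).mul hg) (hf.mul (contDiff_pd hg μ)),
      pd_mul (contDiff_pd hf μ) hg, pd_mul hf (contDiff_pd hg μ)]
    ring
  rw [Finset.sum_congr rfl fun μ _ => h2 μ, Finset.sum_add_distrib, Finset.sum_add_distrib,
    lap_eq f, lap_eq g, ← Finset.sum_mul, ← Finset.mul_sum, ← Finset.mul_sum]

lemma step_eval (y : EuclideanSpace ℝ (Fin n)) {f g : EuclideanSpace ℝ (Fin n) → ℝ} (c : ℝ)
    (h : ∀ x, c * f x + eul y f x = g x) : c * f y = g y := by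
  have := h y
  rwa [eul_self, add_zero] at this

lemma step_pd (y : EuclideanSpace ℝ (Fin n)) {f g : EuclideanSpace ℝ (Fin n) → ℝ}
    (hf : ContDiff ℝ (⊤ : ℕ∞) f) (c : ℝ) (h : ∀ x, c * f x + eul y f x = g x) (μ : Fin n) :
    ∀ x, (c + 1) * pd f μ x + eul y (pd f μ) x = pd g μ x := by
  intro x
  have hG : g = fun z => c * f z + eul y f z := funext fun z => (h z).symm
  rw [hG, pd_add (contDiff_const.mul hf) (contDiff_eul y hf),
    pd_const_mul hf, pd_eul y hf]
  ring

lemma step_lap (y : EuclideanSpace ℝ (Fin n)) {f g : EuclideanSpace ℝ (Fin n) → ℝ}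
    (hf : ContDiff ℝ (⊤ : ℕ∞) f) (c : ℝ) (h : ∀ x, c * f x + eul y f x = g x) :
    ∀ x, (c + 2) * laplacian f x + eul y (laplacian f) x = laplacian g x := by
  intro x
  have hG : g = fun z => c * f z + eul y f z := funext fun z => (h z).symm
  rw [hG, lap_add (contDiff_const.mul hf) (contDiff_eul y hf),
    lap_const_mul hf, lap_eul y hf]
  ring

end SDW

/-- For the transport recursion of Seeley–DeWitt coefficients
(`a₀ = 1`, `(k + (x-y)^μ∂_μ^{(x)})a_k = (Δ_x + v)a_{k-1}`, smooth solutions),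
the third coefficient on the diagonal equals
`a₃(y,y) = (1/60)Δ²v(y) + (1/6)v(y)³ + (1/12)|∇v(y)|² + (1/6)v(y)Δv(y)`. -/
theorem seeley_dewitt_a3_diag {n : ℕ} (v : EuclideanSpace ℝ (Fin n) → ℝ)
    (hv : ContDiff ℝ (⊤ : ℕ∞) v)
    (a : ℕ → EuclideanSpace ℝ (Fin n) → EuclideanSpace ℝ (Fin n) → ℝ)
    (hsm : ∀ k y, ContDiff ℝ (⊤ : ℕ∞) (fun x => a k x y))
    (h0 : ∀ x y, a 0 x y = 1)
    (hrec : ∀ k : ℕ, 1 ≤ k → ∀ x y : EuclideanSpace ℝ (Fin n),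
      (k : ℝ) * a k x y
        + ∑ μ, (x μ - y μ) * fderiv ℝ (fun x' => a k x' y) x (EuclideanSpace.single μ 1)
      = laplacian (fun x' => a (k - 1) x' y) x + v x * a (k - 1) x y)
    (y : EuclideanSpace ℝ (Fin n)) :
    a 3 y y = (1/60) * laplacian (laplacian v) y + (1/6) * (v y) ^ 3
      + (1/12) * ∑ μ, (pd v μ y) ^ 2 + (1/6) * v y * laplacian v y := by
  have sm : ∀ k : ℕ, ContDiff ℝ (⊤ : ℕ∞) (fun x => a k x y) := fun k => hsm k y
  -- Equation for k = 1 : a₀ = 1, so 1·a₁ + E a₁ = v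
  have E1 : ∀ x, (1 : ℝ) * a 1 x y + SDW.eul y (fun x' => a 1 x' y) x = v x := by
    intro x
    have h := hrec 1 le_rfl x y
    have ha0 : (fun x' => a 0 x' y) = fun _ => (1 : ℝ) := funext fun x' => h0 x' y
    rw [ha0, SDW.lap_const, h0] at h
    have he : SDW.eul y (fun x' => a 1 x' y) x
        = ∑ μ, (x μ - y μ) * fderiv ℝ (fun x' => a 1 x' y) x (EuclideanSpace.single μ 1) := rfl
    rw [he]
    push_cast at h
    linarith [h]
  have A1 : (1 : ℝ) * a 1 y y = v y := by
    have h := E1 y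
    rwa [SDW.eul_self, add_zero] at h
  -- first derivatives of a₁ at the diagonal
  have E1p : ∀ μ : Fin n, ∀ x, (2 : ℝ) * pd (fun x' => a 1 x' y) μ x
      + SDW.eul y (pd (fun x' => a 1 x' y) μ) x = pd v μ x := by
    intro μ x
    have h := SDW.step_pd y (sm 1) 1 E1 μ x
    norm_num at h
    exact h
  have A2 : ∀ μ : Fin n, (2 : ℝ) * pd (fun x' => a 1 x' y) μ y = pd v μ y :=
    fun μ => SDW.step_eval y 2 (E1p μ)
  -- Laplacian of a₁
  have E1l : ∀ x, (3 : ℝ) * laplacian (fun x' => a 1 x' y) x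
      + SDW.eul y (laplacian (fun x' => a 1 x' y)) x = laplacian v x := by
    intro x
    have h := SDW.step_lap y (sm 1) 1 E1 x
    norm_num at h
    exact h
  have A3 : (3 : ℝ) * laplacian (fun x' => a 1 x' y) y = laplacian v y := by
    have h := E1l y
    rwa [SDW.eul_self, add_zero] at h
  -- bi-Laplacian of a₁
  have E1ll : ∀ x, (5 : ℝ) * laplacian (laplacian (fun x' => a 1 x' y)) x
      + SDW.eul y (laplacian (laplacian (fun x' => a 1 x' y))) x
      = laplacian (laplacian v) x := by
    intro x
    have h := SDW.step_lap y (SDW.contDiff_lap (sm 1)) 3 E1l x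
    norm_num at h
    exact h
  have A4 : (5 : ℝ) * laplacian (laplacian (fun x' => a 1 x' y)) y
      = laplacian (laplacian v) y := by
    have h := E1ll y
    rwa [SDW.eul_self, add_zero] at h
  -- Equation for k = 2
  have E2 : ∀ x, (2 : ℝ) * a 2 x y + SDW.eul y (fun x' => a 2 x' y) x
      = laplacian (fun x' => a 1 x' y) x + v x * a 1 x y := by
    intro x
    have h := hrec 2 (by norm_num) x y
    norm_num at h
    have he : SDW.eul y (fun x' => a 2 x' y) x
        = ∑ μ, (x μ - y μ) * fderiv ℝ (fun x' => a 2 x' y) x (EuclideanSpace.single μ 1) := rfl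
    rw [he]
    linarith [h]
  have A5 : (2 : ℝ) * a 2 y y = laplacian (fun x' => a 1 x' y) y + v y * a 1 y y := by
    have h := E2 y
    rwa [SDW.eul_self, add_zero] at h
  -- Laplacian of a₂
  have E2l : ∀ x, (4 : ℝ) * laplacian (fun x' => a 2 x' y) x
      + SDW.eul y (laplacian (fun x' => a 2 x' y)) x
      = laplacian (fun x => laplacian (fun x' => a 1 x' y) x + v x * a 1 x y) x := by
    intro x
    have h := SDW.step_lap y (sm 2) 2 E2 x
    norm_num at h
    exact h
  have A6 : (4 : ℝ) * laplacian (fun x' => a 2 x' y) y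
      = laplacian (fun x => laplacian (fun x' => a 1 x' y) x + v x * a 1 x y) y := by
    have h := E2l y
    rwa [SDW.eul_self, add_zero] at h
  have hexp : laplacian (fun x => laplacian (fun x' => a 1 x' y) x + v x * a 1 x y) y
      = laplacian (laplacian (fun x' => a 1 x' y)) y
        + laplacian (fun x => v x * a 1 x y) y :=
    SDW.lap_add (SDW.contDiff_lap (sm 1)) (hv.mul (sm 1)) y
  have hmul : laplacian (fun x => v x * a 1 x y) y
      = laplacian v y * a 1 y y
        + 2 * ∑ μ, pd v μ y * pd (fun x' => a 1 x' y) μ y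
        + v y * laplacian (fun x' => a 1 x' y) y :=
    SDW.lap_mul hv (sm 1) y
  have hsum : ∑ μ, pd v μ y * pd (fun x' => a 1 x' y) μ y
      = (1/2) * ∑ μ, (pd v μ y) ^ 2 := by
    rw [Finset.mul_sum]
    refine Finset.sum_congr rfl fun μ _ => ?_
    have h := A2 μ
    linear_combination (pd v μ y / 2) * h
  -- Equation for k = 3, evaluated on the diagonal
  have E3 : ∀ x, (3 : ℝ) * a 3 x y + SDW.eul y (fun x' => a 3 x' y) x
      = laplacian (fun x' => a 2 x' y) x + v x * a 2 x y := by
    intro x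
    have h := hrec 3 (by norm_num) x y
    norm_num at h
    have he : SDW.eul y (fun x' => a 3 x' y) x
        = ∑ μ, (x μ - y μ) * fderiv ℝ (fun x' => a 3 x' y) x (EuclideanSpace.single μ 1) := rfl
    rw [he]
    linarith [h]
  have A7 : (3 : ℝ) * a 3 y y = laplacian (fun x' => a 2 x' y) y + v y * a 2 y y := by
    have h := E3 y
    rwa [SDW.eul_self, add_zero] at h
  -- assemble
  have hv1 : a 1 y y = v y := by linarith
  have hl1 : laplacian (fun x' => a 1 x' y) y = laplacian v y / 3 := by linarith
  have hll1 : laplacian (laplacian (fun x' => a 1 x' y)) y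
      = laplacian (laplacian v) y / 5 := by linarith
  have ha2 : a 2 y y = laplacian v y / 6 + (v y) ^ 2 / 2 := by
    linear_combination (1/2) * A5 + (1/2) * hl1 + (v y / 2) * hv1
  have hl2 : laplacian (fun x' => a 2 x' y) y
      = laplacian (laplacian v) y / 20 + v y * laplacian v y / 3
        + (1/4) * ∑ μ, (pd v μ y) ^ 2 := by
    linear_combination (1/4) * A6 + (1/4) * hexp + (1/4) * hmul + (1/4) * hll1
      + (laplacian v y / 4) * hv1 + (1/2) * hsum + (v y / 4) * hl1
  linear_combination (1/3) * A7 + (1/3) * hl2 + (v y / 3) * ha2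
end
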